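/- arXiv:1901.01573 — 5 statements merged into one kernel-verified Lean document; each statement's English description precedes it below -/
import Mathlib

section
/- Let α be an irrational real number. Then lim_{n→∞} (1/n) · Σ_{i=0}^{n−1} [iα] = 1/2, where [iα] = iα − ⌊iα⌋ is the fractional part of iα. -/
/-!
Weyl's equidistribution theorem for the rotation `y ↦ y + α` of `ℝ/ℤ`. Along the orbit,
the character `fourier k` takes the values of a geometric progression whose ratio
`e^{2πikα}` is `≠ 1` when `k ≠ 0`, so its averages tend to `0 = ∫ fourier k`. The averages
are `1`-Lipschitz in the sup norm, so their convergence to the integral passes from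
trigonometric polynomials to their closure, all of `C(ℝ/ℤ, ℂ)`. The sawtooth `{y}` is not
continuous, but it lies between continuous functions (polynomials in `{y}`) whose integrals
are arbitrarily close to `1/2`.
-/

open Filter Topology MeasureTheory Set AddCircle

section BirkhoffAverage

variable {X : Type*} {f : X → X}

theorem birkhoffAverage_mono {φ ψ : X → ℝ} (h : φ ≤ ψ) (n : ℕ) (x : X) :
    birkhoffAverage ℝ f φ n x ≤ birkhoffAverage ℝ f ψ n x := by
  unfold birkhoffAverage birkhoffSum
  gcongr with k
  exact h _

theorem norm_birkhoffAverage_le {𝕜 E : Type*} [RCLike 𝕜] [NormedAddCommGroup E]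
    [NormedSpace 𝕜 E] {φ : X → E} {C : ℝ} (h : ∀ y, ‖φ y‖ ≤ C) (n : ℕ) (x : X) :
    ‖birkhoffAverage 𝕜 f φ n x‖ ≤ C := by
  rcases n.eq_zero_or_pos with rfl | hn
  · simpa using (norm_nonneg _).trans (h x)
  calc ‖birkhoffAverage 𝕜 f φ n x‖
      ≤ (n : ℝ)⁻¹ * ∑ k ∈ Finset.range n, ‖φ (f^[k] x)‖ := by
        rw [birkhoffAverage, birkhoffSum, norm_smul, norm_inv, RCLike.norm_natCast]
        gcongr
        exact norm_sum_le _ _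
    _ ≤ (n : ℝ)⁻¹ * (n * C) := by
        gcongr
        simpa using Finset.sum_le_sum (s := Finset.range n) fun k _ => h (f^[k] x)
    _ = C := by field_simp

theorem tendsto_birkhoffAverage_of_continuous_sandwich [TopologicalSpace X]
    [MeasurableSpace X] {μ : Measure X} {x : X} {φ : X → ℝ} {c : ℝ}
    (hconv : ∀ u : C(X, ℝ), Tendsto (birkhoffAverage ℝ f u · x) atTop (𝓝 (∫ y, u y ∂μ)))
    (hlower : ∀ b < c, ∃ u : C(X, ℝ), ⇑u ≤ φ ∧ b < ∫ y, u y ∂μ)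
    (hupper : ∀ b > c, ∃ u : C(X, ℝ), φ ≤ ⇑u ∧ ∫ y, u y ∂μ < b) :
    Tendsto (birkhoffAverage ℝ f φ · x) atTop (𝓝 c) := by
  refine tendsto_order.2 ⟨fun b hb => ?_, fun b hb => ?_⟩
  · obtain ⟨u, hu, hbu⟩ := hlower b hb
    filter_upwards [(hconv u).eventually_const_lt hbu] with n hn
    exact hn.trans_le (birkhoffAverage_mono hu n x)
  · obtain ⟨u, hu, hbu⟩ := hupper b hb
    filter_upwards [(hconv u).eventually_lt_const hbu] with n hn
    exact (birkhoffAverage_mono hu n x).trans_lt hn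

end BirkhoffAverage

theorem tendsto_inv_mul_geom_sum_of_norm_le_one {𝕜 : Type*} [RCLike 𝕜] {z : 𝕜}
    (hz : ‖z‖ ≤ 1) (h1 : z ≠ 1) :
    Tendsto (fun n : ℕ => (n : 𝕜)⁻¹ * ∑ i ∈ Finset.range n, z ^ i) atTop (𝓝 0) := by
  have hz1 : 0 < ‖z - 1‖ := norm_pos_iff.2 (sub_ne_zero.2 h1)
  refine squeeze_zero_norm (fun n => ?_) (tendsto_const_div_atTop_nhds_zero_nat (2 / ‖z - 1‖))
  have hpow : ‖z ^ n - 1‖ ≤ 2 := by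
    calc ‖z ^ n - 1‖ ≤ ‖z‖ ^ n + ‖(1 : 𝕜)‖ := by
          simpa only [norm_pow] using norm_sub_le (z ^ n) 1
      _ ≤ 2 := by
          rw [norm_one]
          linarith [pow_le_one₀ (norm_nonneg z) hz (n := n)]
  rw [geom_sum_eq h1, norm_mul, norm_inv, RCLike.norm_natCast, norm_div,
    div_eq_inv_mul _ (n : ℝ)]
  gcongr

namespace AddCircle

variable {T : ℝ}

theorem fourier_add_nsmul (k : ℤ) (x a : AddCircle T) (i : ℕ) :
    fourier k (x + i • a) = fourier k x * fourier k a ^ i := by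
  simp only [fourier_apply, smul_add, toCircle_add, smul_comm k i, toCircle_nsmul,
    Circle.coe_mul, Circle.coe_pow]

theorem birkhoffAverage_add_fourier (a : AddCircle T) (k : ℤ) (n : ℕ) (x : AddCircle T) :
    birkhoffAverage ℂ (· + a) (fourier k) n x
      = fourier k x * ((n : ℂ)⁻¹ * ∑ i ∈ Finset.range n, fourier k a ^ i) := by
  simp only [birkhoffAverage, birkhoffSum, add_right_iterate_apply, fourier_add_nsmul,
    ← Finset.mul_sum, smul_eq_mul]
  ring

theorem liftIco_one_coe (f : ℝ → ℝ) (y : ℝ) :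
    liftIco 1 0 f (y : AddCircle (1 : ℝ)) = f (Int.fract y) := by
  rw [← coe_fract y, liftIco_zero_coe_apply ⟨Int.fract_nonneg y, Int.fract_lt_one y⟩]

variable [hT : Fact (0 < T)]

theorem fourier_ne_one_of_not_isOfFinAddOrder {a : AddCircle T} (ha : ¬IsOfFinAddOrder a)
    {k : ℤ} (hk : k ≠ 0) : fourier k a ≠ 1 := by
  rw [fourier_apply, Ne, Circle.coe_eq_one, ← toCircle_zero (T := T),
    (injective_toCircle hT.out.ne').eq_iff]
  exact fun h => ha (isOfFinAddOrder_iff_zsmul_eq_zero.2 ⟨k, hk, h⟩)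

theorem integral_fourier_haarAddCircle (k : ℤ) :
    ∫ y, fourier k y ∂(haarAddCircle (T := T)) = if k = 0 then 1 else 0 := by
  have := congr_fun (fourierCoeff_fourier (T := T) k) 0
  simp only [fourierCoeff, neg_zero, fourier_zero, one_smul] at this
  rw [this, Pi.single_apply]
  simp [eq_comm]

theorem tendsto_birkhoffAverage_add_fourier {a : AddCircle T} (ha : ¬IsOfFinAddOrder a) (k : ℤ)
    (x : AddCircle T) :
    Tendsto (birkhoffAverage ℂ (· + a) (fourier k) · x) atTop
      (𝓝 (∫ y, fourier k y ∂(haarAddCircle (T := T)))) := by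
  rw [integral_fourier_haarAddCircle]
  split_ifs with hk
  · subst hk
    have hinv : ⇑(fourier (T := T) 0) ∘ (· + a) = fourier 0 := by
      ext; simp
    refine tendsto_const_nhds.congr' ?_
    filter_upwards [eventually_ne_atTop 0] with n hn
    rw [birkhoffAverage_of_comp_eq ℂ hinv (Nat.cast_ne_zero.2 hn), fourier_zero]
  · simpa [birkhoffAverage_add_fourier] using
      (tendsto_inv_mul_geom_sum_of_norm_le_one (by rw [fourier_apply, Circle.norm_coe])
        (fourier_ne_one_of_not_isOfFinAddOrder ha hk)).const_mul (fourier k x)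

theorem continuous_integral_haarAddCircle :
    Continuous fun g : C(AddCircle T, ℂ) => ∫ y, g y ∂(haarAddCircle (T := T)) :=
  (continuous_integral.comp (ContinuousMap.toLp 1 haarAddCircle ℂ).continuous).congr
    fun g => integral_congr_ae (ContinuousMap.coeFn_toLp haarAddCircle g)

theorem tendsto_birkhoffAverage_add_of_not_isOfFinAddOrder {a : AddCircle T}
    (ha : ¬IsOfFinAddOrder a) (g : C(AddCircle T, ℂ)) (x : AddCircle T) :
    Tendsto (birkhoffAverage ℂ (· + a) g · x) atTop (𝓝 (∫ y, g y ∂haarAddCircle)) := by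
  set S := {g : C(AddCircle T, ℂ) |
    Tendsto (birkhoffAverage ℂ (· + a) g · x) atTop (𝓝 (∫ y, g y ∂haarAddCircle))}
  have hlip (n : ℕ) :
      LipschitzWith 1 fun g : C(AddCircle T, ℂ) => birkhoffAverage ℂ (· + a) g n x :=
    LipschitzWith.of_dist_le_mul fun g h => by
      rw [NNReal.coe_one, one_mul, dist_eq_norm, dist_eq_norm, ← Pi.sub_apply,
        ← Pi.sub_apply (birkhoffAverage ℂ _ g), ← birkhoffAverage_sub, ← ContinuousMap.coe_sub]
      exact norm_birkhoffAverage_le (ContinuousMap.norm_coe_le_norm (g - h)) n x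
  have hclosed : IsClosed S :=
    (LipschitzWith.uniformEquicontinuous _ 1 hlip).equicontinuous.isClosed_setOfPred_tendsto
      continuous_integral_haarAddCircle
  have hspan : (Submodule.span ℂ (range (fourier (T := T))) : Set C(AddCircle T, ℂ)) ⊆ S := by
    intro g hg
    induction hg using Submodule.span_induction with
    | mem g hg =>
      obtain ⟨k, rfl⟩ := hg
      exact tendsto_birkhoffAverage_add_fourier ha k x
    | zero => simp [S, birkhoffAverage, birkhoffSum]
    | add g h _ _ hg hh =>
      have hint (u : C(AddCircle T, ℂ)) : Integrable u haarAddCircle :=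
        u.continuous.integrable_of_hasCompactSupport (.of_compactSpace _)
      simpa [S, birkhoffAverage_add, integral_add (hint g) (hint h)] using hg.add hh
    | smul c g _ hg =>
      simpa [S, birkhoffAverage, birkhoffSum, integral_const_mul, Finset.mul_sum,
        mul_left_comm] using hg.const_mul c
  have hall := closure_minimal hspan hclosed
  rw [← Submodule.topologicalClosure_coe, span_fourier_closure_eq_top] at hall
  exact hall trivial

theorem tendsto_birkhoffAverage_add_of_not_isOfFinAddOrder_real {a : AddCircle T}
    (ha : ¬IsOfFinAddOrder a) (u : C(AddCircle T, ℝ)) (x : AddCircle T) :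
    Tendsto (birkhoffAverage ℝ (· + a) u · x) atTop (𝓝 (∫ y, u y ∂haarAddCircle)) := by
  have h := (Complex.continuous_re.tendsto _).comp
    (tendsto_birkhoffAverage_add_of_not_isOfFinAddOrder ha
      ((Complex.ofRealCLM : C(ℝ, ℂ)).comp u) x)
  simpa [Function.comp_def, integral_complex_ofReal, birkhoffAverage, birkhoffSum] using h

theorem integral_liftIco_haarAddCircle (a : ℝ) (f : ℝ → ℝ) :
    ∫ y, liftIco T a f y ∂haarAddCircle = T⁻¹ * ∫ t in a..a + T, f t := by
  rw [integral_haarAddCircle, ← AddCircle.intervalIntegral_preimage T a, smul_eq_mul,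
    intervalIntegral.integral_of_le (by linarith [hT.out]),
    intervalIntegral.integral_of_le (by linarith [hT.out]),
    integral_Ioc_eq_integral_Ioo, integral_Ioc_eq_integral_Ioo]
  congr 1
  exact setIntegral_congr_fun measurableSet_Ioo fun t ht =>
    liftIco_coe_apply (Ioo_subset_Ico_self ht)

end AddCircle

noncomputable def sawtooth : AddCircle (1 : ℝ) → ℝ := liftIco 1 0 id

theorem sawtooth_coe (y : ℝ) : sawtooth y = Int.fract y :=
  liftIco_one_coe id y

theorem exists_continuous_le_sawtooth {b : ℝ} (hb : b < 1 / 2) :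
    ∃ u : C(AddCircle (1 : ℝ), ℝ), ⇑u ≤ sawtooth ∧ b < ∫ y, u y ∂haarAddCircle := by
  obtain ⟨m, hm⟩ := exists_nat_one_div_lt (sub_pos.2 hb)
  refine ⟨⟨liftIco 1 0 fun t => t - t ^ (m + 1),
    liftIco_zero_continuous (by simp) (by fun_prop)⟩, fun y => ?_, ?_⟩
  · induction y using QuotientAddGroup.induction_on with | H y => ?_
    simp only [ContinuousMap.coe_mk, liftIco_one_coe, sawtooth_coe]
    linarith [pow_nonneg (Int.fract_nonneg y) (m + 1)]
  · have hint : ∫ t in (0 : ℝ)..1, (t - t ^ (m + 1)) = 1 / 2 - 1 / (m + 2) := by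
      rw [intervalIntegral.integral_sub intervalIntegral.intervalIntegrable_id
        (intervalIntegral.intervalIntegrable_pow _), integral_id, integral_pow]
      push_cast; ring
    rw [ContinuousMap.coe_mk, integral_liftIco_haarAddCircle, zero_add, inv_one, one_mul, hint]
    have : (1 : ℝ) / (m + 2) < 1 / (m + 1) := by gcongr; linarith
    linarith

theorem exists_continuous_sawtooth_le {b : ℝ} (hb : 1 / 2 < b) :
    ∃ u : C(AddCircle (1 : ℝ), ℝ), sawtooth ≤ ⇑u ∧ ∫ y, u y ∂haarAddCircle < b := by
  obtain ⟨m, hm⟩ := exists_nat_one_div_lt (sub_pos.2 hb)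
  refine ⟨⟨liftIco 1 0 fun t => t + (1 - t) ^ (m + 1),
    liftIco_zero_continuous (by simp) (by fun_prop)⟩, fun y => ?_, ?_⟩
  · induction y using QuotientAddGroup.induction_on with | H y => ?_
    simp only [ContinuousMap.coe_mk, liftIco_one_coe, sawtooth_coe]
    linarith [pow_nonneg (sub_nonneg.2 (Int.fract_lt_one y).le) (m + 1)]
  · have hint : ∫ t in (0 : ℝ)..1, (t + (1 - t) ^ (m + 1)) = 1 / 2 + 1 / (m + 2) := by
      rw [intervalIntegral.integral_add intervalIntegral.intervalIntegrable_id
        (by apply Continuous.intervalIntegrable; fun_prop), integral_id,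
        intervalIntegral.integral_comp_sub_left (fun t => t ^ (m + 1)), integral_pow]
      push_cast; ring
    rw [ContinuousMap.coe_mk, integral_liftIco_haarAddCircle, zero_add, inv_one, one_mul, hint]
    have : (1 : ℝ) / (m + 2) < 1 / (m + 1) := by gcongr; linarith
    linarith

/-- For irrational `α`, the Cesàro averages of the fractional parts of the integer
multiples of `α` converge to `1/2`. -/
theorem cesaro_fract_irrational (α : ℝ) (hα : Irrational α) :
    Tendsto (fun n : ℕ => (1 / (n : ℝ)) * ∑ i ∈ Finset.range n, Int.fract ((i : ℝ) * α))
      atTop (nhds (1 / 2)) := by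
  have hrot : ¬IsOfFinAddOrder (α : AddCircle (1 : ℝ)) := by
    rw [not_isOfFinAddOrder_iff_forall_rat_ne_div, div_one]
    exact fun q => (hα.ne_rat q).symm
  have hsawtooth := tendsto_birkhoffAverage_of_continuous_sandwich
    (fun u => tendsto_birkhoffAverage_add_of_not_isOfFinAddOrder_real hrot u 0)
    (fun _ => exists_continuous_le_sawtooth) (fun _ => exists_continuous_sawtooth_le)
  refine hsawtooth.congr fun n => ?_
  simp [birkhoffAverage, birkhoffSum, add_right_iterate_apply, ← sawtooth_coe]
end

section
/- Let α be a positive rational number written in irreducible form α = m/l with m, l ∈ ℕ, l ≠ 0 and gcd(m, l) = 1. Then lim_{n→∞} (1/n) · Σ_{i=0}^{n−1} [iα] = (l − 1)/(2l), where [iα] = iα − ⌊iα⌋ is the fractional part of iα. -/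
/-!
The sequence `i ↦ [i m / l]` is `l`-periodic, so its Cesàro averages converge to its mean over
one period. Since `m` is invertible mod `l`, over one period `i ↦ i m mod l` runs through
`0, …, l - 1`, so the period sum is `(0 + 1 + ⋯ + (l - 1)) / l = (l - 1) / 2`.
-/

open Filter Finset Function

namespace Function.Periodic

variable {p : ℕ}

theorem periodic_sum_range {M : Type*} [AddCommMonoid M] {f : ℕ → M} (hf : Periodic f p)
    (h0 : ∑ i ∈ range p, f i = 0) : Periodic (fun n => ∑ i ∈ range n, f i) p := by
  intro n
  dsimp only
  rw [add_comm, sum_range_add, h0, zero_add]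
  exact sum_congr rfl fun i _ => by rw [add_comm, hf]

theorem exists_norm_le {E : Type*} [SeminormedAddCommGroup E] {u : ℕ → E} (hu : Periodic u p)
    (hp : p ≠ 0) : ∃ C, ∀ n, ‖u n‖ ≤ C := by
  refine ⟨∑ r ∈ range p, ‖u r‖, fun n => ?_⟩
  rw [← hu.map_mod_nat n]
  exact single_le_sum (fun _ _ => norm_nonneg _)
    (mem_range.2 (Nat.mod_lt _ (Nat.pos_of_ne_zero hp)))

theorem tendsto_cesaro {f : ℕ → ℝ} (hf : Periodic f p) (hp : p ≠ 0) :
    Tendsto (fun n : ℕ => (1 / (n : ℝ)) * ∑ i ∈ range n, f i) atTop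
      (nhds ((∑ i ∈ range p, f i) / p)) := by
  set c := (∑ i ∈ range p, f i) / p
  have hg : Periodic (fun i => f i - c) p := fun i => by simp only [hf i]
  have hg0 : ∑ i ∈ range p, (f i - c) = 0 := by
    rw [sum_sub_distrib, sum_const, card_range, nsmul_eq_mul, mul_div_cancel₀ _ (Nat.cast_ne_zero.2 hp)]
    exact sub_self _
  obtain ⟨C, hC⟩ := (hg.periodic_sum_range hg0).exists_norm_le hp
  have hdev :
      Tendsto (fun n : ℕ => (1 / (n : ℝ)) * ∑ i ∈ range n, (f i - c)) atTop (nhds 0) :=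
    tendsto_one_div_atTop_nhds_zero_nat.zero_mul_isBoundedUnder_le (isBoundedUnder_of ⟨C, hC⟩)
  rw [← tendsto_sub_nhds_zero_iff]
  refine hdev.congr' ?_
  filter_upwards [eventually_ne_atTop 0] with n hn
  rw [sum_sub_distrib, sum_const, card_range, nsmul_eq_mul]
  field_simp

end Function.Periodic

theorem Nat.Coprime.sum_range_mul_mod {M : Type*} [AddCommMonoid M] {m l : ℕ}
    (h : Nat.Coprime m l) (g : ℕ → M) :
    ∑ i ∈ range l, g (i * m % l) = ∑ i ∈ range l, g i := by
  have hmaps : Set.MapsTo (fun i => i * m % l) (range l) (range l) := fun i hi =>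
    mem_range.2 (Nat.mod_lt _ (Nat.zero_lt_of_lt (mem_range.1 hi)))
  have hinj : Set.InjOn (fun i => i * m % l) (range l) := fun i hi j hj hij =>
    (Nat.ModEq.cancel_right_of_coprime h.symm hij).eq_of_lt_of_lt (mem_range.1 hi) (mem_range.1 hj)
  have hbij := ((range l).finite_toSet.injOn_iff_bijOn_of_mapsTo hmaps).1 hinj
  exact sum_nbij _ hmaps hinj hbij.surjOn fun _ _ => rfl

section FractMulDiv

variable {k : Type*} [Field k] [LinearOrder k] [IsOrderedRing k] [FloorRing k]

theorem Int.fract_natCast_mul_div_natCast (i m l : ℕ) :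
    Int.fract ((i : k) * (m / l)) = ((i * m % l : ℕ) : k) / l := by
  rw [← Int.fract_div_natCast_eq_div_natCast_mod, mul_div_assoc', Nat.cast_mul]

theorem periodic_fract_natCast_mul_div_natCast (m l : ℕ) :
    Periodic (fun i : ℕ => Int.fract ((i : k) * (m / l))) l := fun i => by
  simp only [Int.fract_natCast_mul_div_natCast, add_mul, Nat.add_mul_mod_self_left]

theorem sum_range_fract_natCast_mul_div_natCast {m l : ℕ} (hl : l ≠ 0) (h : Nat.Coprime m l) :
    ∑ i ∈ range l, Int.fract ((i : k) * (m / l)) = ((l : k) - 1) / 2 := by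
  have hgauss : (∑ i ∈ range l, (i : k)) * 2 = l * (l - 1) := by
    rw [← Nat.cast_sum, ← Nat.cast_ofNat, ← Nat.cast_mul, sum_range_id_mul_two, Nat.cast_mul,
      Nat.cast_pred (Nat.pos_of_ne_zero hl)]
  simp only [Int.fract_natCast_mul_div_natCast]
  rw [h.sum_range_mul_mod fun j => (j : k) / l, ← sum_div]
  field_simp
  linear_combination hgauss

end FractMulDiv

theorem cesaro_fract_rational_general (m l : ℕ) (hl : l ≠ 0) (hcop : Nat.gcd m l = 1) :
    Tendsto (fun n : ℕ =>
        (1 / (n : ℝ)) * ∑ i ∈ Finset.range n, Int.fract ((i : ℝ) * ((m : ℝ) / (l : ℝ))))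
      atTop (nhds (((l : ℝ) - 1) / (2 * (l : ℝ)))) := by
  have h := (periodic_fract_natCast_mul_div_natCast (k := ℝ) m l).tendsto_cesaro hl
  rwa [sum_range_fract_natCast_mul_div_natCast hl hcop, div_div] at h

/-- For a positive rational `α = m / l` in irreducible form, the Cesàro averages of the
fractional parts of the integer multiples of `α` converge to `(l - 1) / (2 l)`. -/
theorem cesaro_fract_rational (m l : ℕ) (hm : 0 < m) (hl : l ≠ 0) (hcop : Nat.gcd m l = 1) :
    Tendsto (fun n : ℕ =>
        (1 / (n : ℝ)) * ∑ i ∈ Finset.range n, Int.fract ((i : ℝ) * ((m : ℝ) / (l : ℝ))))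
      atTop (nhds (((l : ℝ) - 1) / (2 * (l : ℝ)))) :=
  cesaro_fract_rational_general m l hl hcop
end

section
/- Let n ≥ k ≥ 1 be integers and ε_p ∈ [0,1). Let H and T be independent random variables where H takes values in {0,1,2,…} with P(H = x) = ε_p^x (1 − ε_p), and T is an integrable random variable taking values in {k, k+1, …, n}. Define Y = n(H + 1) and Q = n(n−1)H + nT(1+H) + n²H²/2 + n(n−2)/2. Then E(Q)/E(Y) = E(T) − 1 + n(1 + ε_p)/(2(1 − ε_p)). (This is the average-age formula Δ = E(T) − 1 + n(1+ε_p)/(2(1−ε_p)) obtained from the renewal-reward ratio E(Q)/E(Y), where H is the number of erased packets in a renewal interval, T the decoding delay of the successful packet, Y the interdeparture time, and ε_p the packet erasure probability.) -/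
open MeasureTheory ProbabilityTheory

/-! Both `E[Y]` and `E[Q]` are linear in `E[H]`, `E[H²]` and `E[T(1+H)]`, and independence
factors the last one as `E[T](1 + E[H])`. For the geometric law, `E[H] = ε/(1-ε)` and
`E[H²] = ε(1+ε)/(1-ε)²`, the latter from `x² = 2·C(x+2,2) - 3x - 2` and the
negative-binomial series `∑ C(x+2,2) εˣ = (1-ε)⁻³`. Since `1 + E[H] = 1/(1-ε)`, dividing by
`E[Y] = n/(1-ε)` leaves the stated rational expression in `ε`. -/

theorem hasSum_sq_mul_geometric_of_norm_lt_one {𝕜 : Type*} [NormedField 𝕜]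
    [HasSummableGeomSeries 𝕜] {r : 𝕜} (hr : ‖r‖ < 1) :
    HasSum (fun n : ℕ => (n : 𝕜) ^ 2 * r ^ n) (r * (1 + r) / (1 - r) ^ 3) := by
  have hr1 : 1 - r ≠ 0 := sub_ne_zero.mpr fun h => by simp [← h] at hr
  have hchoose := (hasSum_choose_mul_geometric_of_norm_lt_one 2 hr).mul_left 2
  have hcoe := (hasSum_coe_mul_geometric_of_norm_lt_one hr).mul_left 3
  have hgeom := (hasSum_geometric_of_norm_lt_one hr).mul_left 2
  convert (hchoose.sub hcoe).sub hgeom using 1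
  · rfl
  · funext n
    have h2 : (n + 2).choose 2 * 2 = (n + 2) * (n + 1) := by
      rw [← Nat.add_one_mul_choose_eq, Nat.choose_one_right]
    have h2' := congrArg (Nat.cast : ℕ → 𝕜) h2
    push_cast at h2'
    linear_combination -(r ^ n) * h2'
  · field_simp
    ring

section DiscreteLaw

variable {Ω α E : Type*} [MeasurableSpace Ω] [MeasurableSpace α] [Countable α]
  [MeasurableSingletonClass α] [NormedAddCommGroup E]
  {μ : Measure Ω} {X : Ω → α} {p : α → ℝ}

theorem map_eq_sum_ofReal_smul_dirac (hX : Measurable X)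
    (hp : ∀ x, μ {ω | X ω = x} = ENNReal.ofReal (p x)) :
    μ.map X = Measure.sum fun x => ENNReal.ofReal (p x) • Measure.dirac x := by
  conv_lhs => rw [← Measure.sum_smul_dirac (μ.map X)]
  congr 1 with x : 1
  rw [Measure.map_apply hX (measurableSet_singleton x)]
  exact congrArg (· • Measure.dirac x) (hp x)

variable (hX : Measurable X) (hp : ∀ x, μ {ω | X ω = x} = ENNReal.ofReal (p x))
  (hp0 : ∀ x, 0 ≤ p x) {f : α → E} (hf : Summable fun x => p x * ‖f x‖)
include hX hp hp0 hf

theorem integrable_comp_of_summable : Integrable (fun ω => f (X ω)) μ := by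
  refine (integrable_map_measure StronglyMeasurable.of_discrete.aestronglyMeasurable
    hX.aemeasurable).mp ?_
  rw [map_eq_sum_ofReal_smul_dirac hX hp]
  refine integrable_sum_dirac (fun _ => ENNReal.ofReal_ne_top) ?_
  simpa only [ENNReal.toReal_ofReal (hp0 _)] using hf

theorem hasSum_integral_comp_of_summable [NormedSpace ℝ E] [CompleteSpace E] :
    HasSum (fun x => p x • f x) (∫ ω, f (X ω) ∂μ) := by
  rw [← integral_map hX.aemeasurable StronglyMeasurable.of_discrete.aestronglyMeasurable,
    map_eq_sum_ofReal_smul_dirac hX hp]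
  have hc : ∀ x, ENNReal.ofReal (p x) ≠ ⊤ := fun _ => ENNReal.ofReal_ne_top
  have hf' : Summable fun x => (ENNReal.ofReal (p x)).toReal * ‖f x‖ := by
    simpa only [ENNReal.toReal_ofReal (hp0 _)] using hf
  simpa only [ENNReal.toReal_ofReal (hp0 _)] using hasSum_integral_sum_dirac hc hf'

end DiscreteLaw

section Geometric

variable {Ω : Type*} [MeasurableSpace Ω] {μ : Measure Ω} {H : Ω → ℕ} {ε : ℝ}
  (hε0 : 0 ≤ ε) (hε1 : ε < 1) (hH : Measurable H)
  (hlaw : ∀ x : ℕ, μ {ω | H ω = x} = ENNReal.ofReal (ε ^ x * (1 - ε)))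
include hε0 hε1 hH hlaw

theorem integrable_pow_of_geometric (j : ℕ) : Integrable (fun ω => (H ω : ℝ) ^ j) μ := by
  have hε : ‖ε‖ < 1 := by rwa [Real.norm_of_nonneg hε0]
  refine integrable_comp_of_summable (f := fun x : ℕ => (x : ℝ) ^ j) hH hlaw
    (fun x => mul_nonneg (pow_nonneg hε0 x) (sub_nonneg.mpr hε1.le)) ?_
  refine ((summable_pow_mul_geometric_of_norm_lt_one j hε).mul_left (1 - ε)).congr fun x => ?_
  simp only [norm_pow, RCLike.norm_natCast]
  ring

theorem integral_pow_of_geometric (j : ℕ) {S : ℝ}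
    (hS : HasSum (fun x : ℕ => (x : ℝ) ^ j * ε ^ x) S) :
    ∫ ω, (H ω : ℝ) ^ j ∂μ = (1 - ε) * S := by
  refine (hasSum_integral_comp_of_summable (f := fun x : ℕ => (x : ℝ) ^ j) hH hlaw
    (fun x => mul_nonneg (pow_nonneg hε0 x) (sub_nonneg.mpr hε1.le)) ?_).unique ?_
  · refine (hS.summable.mul_left (1 - ε)).congr fun x => ?_
    simp only [norm_pow, RCLike.norm_natCast]
    ring
  · refine (hS.mul_left (1 - ε)).congr_fun fun x => ?_
    rw [smul_eq_mul]
    ring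

theorem integral_of_geometric : ∫ ω, (H ω : ℝ) ∂μ = ε / (1 - ε) := by
  have hε : ‖ε‖ < 1 := by rwa [Real.norm_of_nonneg hε0]
  have h := integral_pow_of_geometric hε0 hε1 hH hlaw 1
    (by simpa only [pow_one] using hasSum_coe_mul_geometric_of_norm_lt_one hε)
  simp only [pow_one] at h
  rw [h]
  field_simp [(sub_pos.mpr hε1).ne']

theorem integral_sq_of_geometric :
    ∫ ω, (H ω : ℝ) ^ 2 ∂μ = ε * (1 + ε) / (1 - ε) ^ 2 := by
  have hε : ‖ε‖ < 1 := by rwa [Real.norm_of_nonneg hε0]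
  rw [integral_pow_of_geometric hε0 hε1 hH hlaw 2 (hasSum_sq_mul_geometric_of_norm_lt_one hε)]
  field_simp [(sub_pos.mpr hε1).ne']

end Geometric

theorem integral_ageArea {Ω : Type*} [MeasurableSpace Ω] {μ : Measure Ω}
    [IsProbabilityMeasure μ] (n : ℝ) {h t : Ω → ℝ} (hind : IndepFun h t μ)
    (hh : Integrable h μ) (hh2 : Integrable (fun ω => h ω ^ 2) μ) (ht : Integrable t μ) :
    ∫ ω, (n * (n - 1) * h ω + n * t ω * (1 + h ω) + n ^ 2 * h ω ^ 2 / 2 +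
        n * (n - 2) / 2) ∂μ =
      n * (n - 1) * μ[h] + n * μ[t] * (1 + μ[h]) + n ^ 2 * μ[fun ω => h ω ^ 2] / 2 +
        n * (n - 2) / 2 := by
  have hind' : IndepFun t (fun ω => 1 + h ω) μ :=
    hind.symm.comp (φ := id) (ψ := fun x => 1 + x) measurable_id (by fun_prop)
  have h1h : Integrable (fun ω => 1 + h ω) μ := (integrable_const 1).add hh
  have hth : Integrable (fun ω => t ω * (1 + h ω)) μ := hind'.integrable_mul ht h1h
  have hEth : ∫ ω, t ω * (1 + h ω) ∂μ = μ[t] * (1 + μ[h]) := by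
    rw [hind'.integral_fun_mul_eq_mul_integral ht.1 h1h.1,
      integral_add (integrable_const 1) hh]
    simp
  have hQ : (fun ω => n * (n - 1) * h ω + n * t ω * (1 + h ω) + n ^ 2 * h ω ^ 2 / 2 +
      n * (n - 2) / 2) = fun ω => (n * (n - 1) * h ω + n * (t ω * (1 + h ω)) +
        n ^ 2 / 2 * h ω ^ 2) + n * (n - 2) / 2 := by
    funext ω
    ring
  rw [hQ, integral_add (by fun_prop) (by fun_prop), integral_add (by fun_prop) (by fun_prop),
    integral_add (by fun_prop) (by fun_prop), integral_const_mul, integral_const_mul,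
    integral_const_mul, hEth]
  simp only [integral_const, probReal_univ, smul_eq_mul, one_mul]
  ring

theorem average_age_formula_general {Ω : Type*} [MeasureSpace Ω]
    [IsProbabilityMeasure (volume : Measure Ω)]
    (n k : ℕ) (hk : 1 ≤ k) (hkn : k ≤ n) (εp : ℝ) (hεp : εp ∈ Set.Ico (0:ℝ) 1)
    (H T : Ω → ℕ) (hHmeas : Measurable H)
    (hindep : IndepFun H T volume)
    (hHdist : ∀ x : ℕ, volume {ω | H ω = x} = ENNReal.ofReal (εp^x * (1 - εp)))
    (hTint : Integrable (fun ω => (T ω : ℝ))) :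
    (∫ ω, ((n : ℝ) * ((n : ℝ) - 1) * (H ω : ℝ) + (n : ℝ) * (T ω : ℝ) * (1 + (H ω : ℝ)) +
        (n : ℝ)^2 * (H ω : ℝ)^2 / 2 + (n : ℝ) * ((n : ℝ) - 2) / 2)) /
      (∫ ω, ((n : ℝ) * ((H ω : ℝ) + 1))) =
    (∫ ω, (T ω : ℝ)) - 1 + (n : ℝ) * (1 + εp) / (2 * (1 - εp)) := by
  obtain ⟨hε0, hε1⟩ := hεp
  have hH1 : Integrable (fun ω => (H ω : ℝ)) := by
    simpa only [pow_one] using integrable_pow_of_geometric hε0 hε1 hHmeas hHdist 1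
  have hindepR : IndepFun (fun ω => (H ω : ℝ)) (fun ω => (T ω : ℝ)) volume :=
    hindep.comp measurable_from_top measurable_from_top
  have hEY : ∫ ω, (n : ℝ) * ((H ω : ℝ) + 1) = n * (εp / (1 - εp) + 1) := by
    rw [integral_const_mul, integral_add hH1 (integrable_const 1),
      integral_of_geometric hε0 hε1 hHmeas hHdist]
    simp
  have hn : (n : ℝ) ≠ 0 := Nat.cast_ne_zero.mpr (by omega)
  rw [integral_ageArea n hindepR hH1 (integrable_pow_of_geometric hε0 hε1 hHmeas hHdist 2) hTint,
    hEY, integral_of_geometric hε0 hε1 hHmeas hHdist,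
    integral_sq_of_geometric hε0 hε1 hHmeas hHdist]
  field_simp [(sub_pos.mpr hε1).ne']
  ring

/-- The average-age formula `E(Q)/E(Y) = E(T) - 1 + n(1+ε_p)/(2(1-ε_p))`, where `H` is the
geometric number of erased packets before a success, `T ∈ {k,…,n}` is the decoding delay of
the successful packet (independent of `H`), `Y = n(H+1)` is the interdeparture time and
`Q = n(n-1)H + nT(1+H) + n²H²/2 + n(n-2)/2` is the age-area over a renewal interval. -/
theorem average_age_formula {Ω : Type*} [MeasureSpace Ω]
    [IsProbabilityMeasure (volume : Measure Ω)]
    (n k : ℕ) (hk : 1 ≤ k) (hkn : k ≤ n) (εp : ℝ) (hεp : εp ∈ Set.Ico (0:ℝ) 1)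
    (H T : Ω → ℕ) (hHmeas : Measurable H) (hTmeas : Measurable T)
    (hindep : IndepFun H T volume)
    (hHdist : ∀ x : ℕ, volume {ω | H ω = x} = ENNReal.ofReal (εp^x * (1 - εp)))
    (hTrange : ∀ ω, T ω ∈ Set.Icc k n)
    (hTint : Integrable (fun ω => (T ω : ℝ))) :
    (∫ ω, ((n : ℝ) * ((n : ℝ) - 1) * (H ω : ℝ) + (n : ℝ) * (T ω : ℝ) * (1 + (H ω : ℝ)) +
        (n : ℝ)^2 * (H ω : ℝ)^2 / 2 + (n : ℝ) * ((n : ℝ) - 2) / 2)) /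
      (∫ ω, ((n : ℝ) * ((H ω : ℝ) + 1))) =
    (∫ ω, (T ω : ℝ)) - 1 + (n : ℝ) * (1 + εp) / (2 * (1 - εp)) :=
  average_age_formula_general n k hk hkn εp hεp H T hHmeas hindep hHdist hTint
end

section
/- Let B be an integrable random variable taking values in the positive integers and let n ≥ 1 be an integer with P(B ≤ n) > 0. Set ε_p = P(B > n). Then E(B·1{B ≤ n})/P(B ≤ n) − 1 + n(1 + ε_p)/(2(1 − ε_p)) ≤ (E(B) − 1)/(1 − ε_p) + n/2. -/
open MeasureTheory ProbabilityTheory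

/-- For a positive-integer valued integrable random variable `B` and `n ≥ 1` with
`P(B ≤ n) > 0`, setting `ε_p = P(B > n)`, one has
`E(B | B ≤ n) - 1 + n(1+ε_p)/(2(1-ε_p)) ≤ (E(B) - 1)/(1-ε_p) + n/2`. -/
theorem average_age_upper_bound {Ω : Type*} [MeasureSpace Ω]
    [IsProbabilityMeasure (volume : Measure Ω)]
    (B : Ω → ℕ) (hBmeas : Measurable B) (hBpos : ∀ ω, 1 ≤ B ω)
    (hBint : Integrable (fun ω => (B ω : ℝ)))
    (n : ℕ) (hn : 1 ≤ n) (hpos : 0 < (volume {ω | B ω ≤ n}).toReal) :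
    (∫ ω in {ω | B ω ≤ n}, (B ω : ℝ)) / (volume {ω | B ω ≤ n}).toReal - 1 +
        (n : ℝ) * (1 + (volume {ω | n < B ω}).toReal) /
          (2 * (1 - (volume {ω | n < B ω}).toReal)) ≤
      ((∫ ω, (B ω : ℝ)) - 1) / (1 - (volume {ω | n < B ω}).toReal) + (n : ℝ) / 2 := by
  set s : Set Ω := {ω | B ω ≤ n} with hs
  have hsm : MeasurableSet s := hBmeas measurableSet_Iic
  have hc : {ω | n < B ω} = sᶜ := by
    ext ω; simp [hs, not_le]
  set p : ℝ := (volume s).toReal with hp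
  set ε : ℝ := (volume sᶜ).toReal with he
  have hsum : p + ε = 1 := by
    rw [hp, he, ← ENNReal.toReal_add (measure_ne_top _ _) (measure_ne_top _ _),
      measure_add_measure_compl hsm]
    simp
  have hsplit : (∫ ω in s, (B ω : ℝ)) + (∫ ω in sᶜ, (B ω : ℝ)) = ∫ ω, (B ω : ℝ) :=
    integral_add_compl hsm hBint
  have hlb : ((n : ℝ) + 1) * ε ≤ ∫ ω in sᶜ, (B ω : ℝ) := by
    have h1 : ∫ ω in sᶜ, ((n : ℝ) + 1) ≤ ∫ ω in sᶜ, (B ω : ℝ) := by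
      apply setIntegral_mono_on (integrableOn_const (measure_ne_top _ _) enorm_ne_top)
        hBint.integrableOn hsm.compl
      intro ω hω
      have : n < B ω := by simpa [hs, Set.mem_compl_iff, not_le] using hω
      exact_mod_cast this
    calc ((n : ℝ) + 1) * ε = ∫ ω in sᶜ, ((n : ℝ) + 1) := by
          rw [setIntegral_const, smul_eq_mul, mul_comm, he, Measure.real]
      _ ≤ _ := h1
  rw [hc]
  have hpe : 1 - ε = p := by linarith
  rw [hpe]
  have hp0 : p ≠ 0 := ne_of_gt hpos
  rw [← he, div_sub' hp0,
    div_add_div _ _ hp0 (by positivity : (2:ℝ)*p ≠ 0),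
    div_add_div _ _ hp0 (by norm_num : (2:ℝ) ≠ 0)]
  rw [div_le_div_iff₀ (by positivity) (by positivity)]
  have key : 2*(∫ ω in s, (B ω : ℝ)) - 2*p*1 + (n:ℝ)*(1+ε) ≤
      2*((∫ ω, (B ω : ℝ)) - 1) + (n:ℝ)*p := by
    nlinarith [hlb, hsum, mul_self_nonneg ((n:ℝ))]
  nlinarith [mul_le_mul_of_nonneg_left key (le_of_lt (mul_pos hpos hpos))]
end

section
/- Fix an integer k ≥ 1, ε ∈ (0,1), and an integer x ≥ k. For each integer q ≥ 2 define p_s(q) = (1−ε) q^s (q^{k−s} − 1)/(q^k − 1) for 0 ≤ s ≤ k − 1. Then, as q → ∞, Σ_{(l_0,…,l_{k−1})} Π_{s=0}^{k−1} (1 − p_s(q))^{l_s − 1} p_s(q) → C(x−1, k−1) (1−ε)^k ε^{x−k}, where the sum is over all k-tuples of positive integers (l_0,…,l_{k−1}) with Σ_{s=0}^{k−1} l_s = x. (That is, the distribution of B = Σ_s L_s, the sum of independent geometric(p_s(q)) variables, converges pointwise to the negative binomial distribution of B̃ as the channel-input alphabet size q grows, which underlies the age-optimality of random codes for large q.) 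-/
/-! The success probabilities satisfy `p_s(q) = (1 - ε)(q^k - q^s)/(q^k - 1) → 1 - ε` as `q → ∞`,
so each of the finitely many summands tends to `∏_s ε^{l_s - 1}(1 - ε) = (1 - ε)^k ε^{x - k}`,
independently of the composition `l`. The limit is therefore this value times the number of
compositions of `x` into `k` positive parts, which is `C(x - 1, k - 1)` by stars and bars. -/

open Filter Topology Finset

lemma Finset.Nat.card_antidiagonalTuple (k n : ℕ) :
    #(Finset.Nat.antidiagonalTuple k n) = (k + n - 1).choose n := by
  rw [← piAntidiag_univ_fin_eq_antidiagonalTuple, ← map_sym_eq_piAntidiag, card_map, sym_univ,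
    card_univ, Sym.card_sym_eq_choose, Fintype.card_fin]

lemma sum_sub_one_of_one_le {k : ℕ} {l : Fin k → ℕ} (hl : ∀ s, 1 ≤ l s) :
    ∑ s, (l s - 1) = ∑ s, l s - k := by
  rw [sum_tsub_distrib _ fun s _ => hl s]
  simp

lemma card_filter_pos_antidiagonalTuple {k x : ℕ} (hk : 1 ≤ k) (hx : k ≤ x) :
    #{l ∈ Finset.Nat.antidiagonalTuple k x | ∀ s, 1 ≤ l s} = (x - 1).choose (k - 1) := by
  have hshift : #{l ∈ Finset.Nat.antidiagonalTuple k x | ∀ s, 1 ≤ l s}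
      = #(Finset.Nat.antidiagonalTuple k (x - k)) := by
    refine card_nbij' (· - 1) (· + 1) ?_ ?_ ?_ ?_
    · intro l hl
      simp only [coe_filter, Finset.Nat.mem_antidiagonalTuple, Set.mem_ofPred_eq] at hl
      obtain ⟨hsum, hpos⟩ := hl
      simp only [mem_coe, Finset.Nat.mem_antidiagonalTuple, Pi.sub_apply, Pi.one_apply]
      rw [sum_sub_one_of_one_le hpos, hsum]
    · intro l hl
      simp only [mem_coe, Finset.Nat.mem_antidiagonalTuple] at hl
      simp only [coe_filter, Finset.Nat.mem_antidiagonalTuple, Set.mem_ofPred_eq]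
      refine ⟨?_, fun s => Nat.le_add_left 1 (l s)⟩
      simp only [Pi.add_apply, Pi.one_apply, sum_add_distrib, hl, sum_const, card_univ,
        Fintype.card_fin, smul_eq_mul, mul_one]
      omega
    · intro l hl
      simp only [coe_filter, Set.mem_ofPred_eq] at hl
      funext s
      exact Nat.sub_add_cancel (hl.2 s)
    · intro l _
      funext s
      exact Nat.add_sub_cancel (l s) 1
  rw [hshift, Finset.Nat.card_antidiagonalTuple, show k + (x - k) - 1 = x - 1 by omega]
  exact Nat.choose_symm_of_eq_add (by omega)

lemma tendsto_pow_sub_pow_div_pow_sub_one {s k : ℕ} (hs : s < k) :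
    Tendsto (fun t : ℝ => (t ^ k - t ^ s) / (t ^ k - 1)) atTop (𝓝 1) := by
  have hpow : Tendsto (fun t : ℝ => t ^ s / t ^ k) atTop (𝓝 0) :=
    tendsto_pow_div_pow_atTop_zero hs
  have hinv : Tendsto (fun t : ℝ => (t ^ k)⁻¹) atTop (𝓝 0) :=
    (tendsto_pow_atTop (by omega)).inv_tendsto_atTop
  have hquot := (tendsto_const_nhds (x := (1 : ℝ)).sub hpow).div
    (tendsto_const_nhds (x := (1 : ℝ)).sub hinv) (by norm_num)
  rw [sub_zero, div_one] at hquot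
  refine hquot.congr' ?_
  filter_upwards [eventually_gt_atTop 1] with t ht
  have htk : 1 < t ^ k := one_lt_pow₀ ht (by omega)
  have htk' : t ^ k - 1 ≠ 0 := by linarith
  simp only [Pi.div_apply]
  field_simp

lemma tendsto_erasure_success_prob {k s : ℕ} (hs : s < k) (ε : ℝ) :
    Tendsto (fun q : ℕ => (1 - ε) * (q : ℝ) ^ s * ((q : ℝ) ^ (k - s) - 1) / ((q : ℝ) ^ k - 1))
      atTop (𝓝 (1 - ε)) := by
  have hlim := ((tendsto_pow_sub_pow_div_pow_sub_one hs).comp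
    tendsto_natCast_atTop_atTop).const_mul (1 - ε)
  rw [mul_one] at hlim
  refine hlim.congr fun q => ?_
  rw [Function.comp_apply, mul_assoc, mul_sub, mul_one, ← pow_add, Nat.add_sub_cancel' hs.le,
    mul_div_assoc]

lemma prod_geometric_pmf_of_sum_eq {k x : ℕ} {l : Fin k → ℕ} (hsum : ∑ s, l s = x)
    (hl : ∀ s, 1 ≤ l s) (π : ℝ) :
    ∏ s, ((1 - π) ^ (l s - 1) * π) = π ^ k * (1 - π) ^ (x - k) := by
  rw [prod_mul_distrib, prod_const, prod_pow_eq_pow_sum, sum_sub_one_of_one_le hl, hsum,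
    card_univ, Fintype.card_fin, mul_comm]

theorem random_code_pointwise_limit_general (k : ℕ) (hk : 1 ≤ k) (ε : ℝ)
    (x : ℕ) (hx : k ≤ x)
    (p : ℕ → ℕ → ℝ)
    (hp : ∀ q s : ℕ, p q s = (1 - ε) * (q : ℝ)^s * ((q : ℝ)^(k - s) - 1) / ((q : ℝ)^k - 1)) :
    Tendsto (fun q : ℕ =>
        ∑ l ∈ (Finset.Nat.antidiagonalTuple k x).filter (fun l => ∀ s : Fin k, 1 ≤ l s),
          ∏ s : Fin k, ((1 - p q (s : ℕ))^(l s - 1) * p q (s : ℕ)))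
      atTop
      (nhds (((x - 1).choose (k - 1) : ℝ) * (1 - ε)^k * ε^(x - k))) := by
  have hp_lim (s : Fin k) : Tendsto (fun q => p q s) atTop (𝓝 (1 - ε)) := by
    simpa only [hp] using tendsto_erasure_success_prob s.isLt ε
  have hq_lim (s : Fin k) : Tendsto (fun q => 1 - p q s) atTop (𝓝 ε) := by
    simpa only [sub_sub_cancel] using (tendsto_const_nhds (x := (1 : ℝ))).sub (hp_lim s)
  have hterm : ∀ l ∈ (Finset.Nat.antidiagonalTuple k x).filter (fun l => ∀ s : Fin k, 1 ≤ l s),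
      Tendsto (fun q => ∏ s : Fin k, ((1 - p q s) ^ (l s - 1) * p q s)) atTop
        (𝓝 ((1 - ε) ^ k * ε ^ (x - k))) := by
    intro l hl
    rw [mem_filter, Finset.Nat.mem_antidiagonalTuple] at hl
    have hprod := prod_geometric_pmf_of_sum_eq hl.1 hl.2 (1 - ε)
    rw [sub_sub_cancel] at hprod
    rw [← hprod]
    exact tendsto_finsetProd _ fun s _ => ((hq_lim s).pow _).mul (hp_lim s)
  convert tendsto_finsetSum _ hterm using 2
  rw [sum_const, card_filter_pos_antidiagonalTuple hk hx, nsmul_eq_mul, mul_assoc]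

/-- As the alphabet size `q → ∞`, the distribution of `B = ∑_s L_s` (a sum of independent
geometric variables with success probabilities `p_s(q) = (1-ε) q^s (q^{k-s}-1)/(q^k-1)`)
converges pointwise to the negative binomial distribution: for each `x ≥ k`, the
probability `P(B = x)` — written as a sum over the compositions of `x` into `k` positive
parts of products of geometric probabilities — tends to `C(x-1, k-1)(1-ε)^k ε^{x-k}`. -/
theorem random_code_pointwise_limit (k : ℕ) (hk : 1 ≤ k) (ε : ℝ) (hε : ε ∈ Set.Ioo (0:ℝ) 1)
    (x : ℕ) (hx : k ≤ x)
    (p : ℕ → ℕ → ℝ)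
    (hp : ∀ q s : ℕ, p q s = (1 - ε) * (q : ℝ)^s * ((q : ℝ)^(k - s) - 1) / ((q : ℝ)^k - 1)) :
    Tendsto (fun q : ℕ =>
        ∑ l ∈ (Finset.Nat.antidiagonalTuple k x).filter (fun l => ∀ s : Fin k, 1 ≤ l s),
          ∏ s : Fin k, ((1 - p q (s : ℕ))^(l s - 1) * p q (s : ℕ)))
      atTop
      (nhds (((x - 1).choose (k - 1) : ℝ) * (1 - ε)^k * ε^(x - k))) :=
  random_code_pointwise_limit_general k hk ε x hx p hp
end
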